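/- arXiv:1909.11921 — 2 statements merged into one kernel-verified Lean document; each statement's English description precedes it below -/
import Mathlib

section
/- Suppose g = 0. Then a mixed stopping strategy p̂ is an equilibrium if and only if τ_p̂ is an optimal stopping time for the problem sup_τ E_x[f(X_τ)], i.e. E_x[f(X_{τ_p̂})] = sup_τ E_x[f(X_τ)] for every x ∈ E, where the supremum is over all stopping times τ of the filtration σ(X_0,…,X_n,Y_0,…,Y_n). -/
/-!
Analytic model of the time-inconsistent stopping framework of Christensen & Lindensjö,
"Time-inconsistent stopping, myopic adjustment & equilibrium stability".

A time-homogeneous Markov chain `X` on a finite state space `E` is encoded by its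
transition matrix `P` (`P x y = P_x(X_1 = y)`).  A mixed stopping strategy is a vector
`p ∈ [0,1]^E`; the associated stopping time is `τ_p = min {n ≥ 0 : Y_n ≤ p_{X_n}}`,
where the `Y_n` are i.i.d. uniform randomization devices.  The quantity
`phi P p f x = E_x[f(X_{τ_p})]` (with the convention `f(X_{τ_p}) := lim_n f(X_n)` on
`{τ_p = ∞}`, the limit existing a.s. by absorption) is realized analytically, via
dominated convergence, as the limit in `n` of the finite-horizon values
`phiSeq P p f n x = E_x[f(X_{τ_p ∧ n})]`, which satisfy the one-step recursion given
by the Markov property.  Likewise `step P v x = E_x[v(X_1)]`.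
-/

open Filter

variable {E : Type*}

/-- One-step expectation operator: `step P v x = E_x[v(X_1)] = ∑ y, P x y * v y`. -/
noncomputable def step [Fintype E] (P : E → E → ℝ) (v : E → ℝ) (x : E) : ℝ :=
  ∑ y, P x y * v y

/-- Finite-horizon value `phiSeq P p f n x = E_x[f(X_{τ_p ∧ n})]`. -/
noncomputable def phiSeq [Fintype E] (P : E → E → ℝ) (p f : E → ℝ) : ℕ → E → ℝ
  | 0 => f
  | n + 1 => fun x => p x * f x + (1 - p x) * step P (phiSeq P p f n) x

/-- `phi P p f x = E_x[f(X_{τ_p})]`, with the convention `f(X_{τ_p}) := lim_n f(X_n)`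
on `{τ_p = ∞}`; by dominated convergence it is the limit of the finite-horizon values. -/
noncomputable def phi [Fintype E] (P : E → E → ℝ) (p f : E → ℝ) (x : E) : ℝ :=
  limUnder atTop fun n => phiSeq P p f n x

/-- `P` is a transition matrix (row-stochastic). -/
def IsTransition [Fintype E] (P : E → E → ℝ) : Prop :=
  (∀ x y, 0 ≤ P x y) ∧ ∀ x, ∑ y, P x y = 1

/-- `a` is an absorbing state of the chain. -/
def IsAbsorbingState (P : E → E → ℝ) (a : E) : Prop := P a a = 1

/-- The chain is absorbing: from each starting state, some absorbing state is reached
with positive probability in a finite number of steps. -/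
def IsAbsorbingChain [Fintype E] [DecidableEq E] (P : E → E → ℝ) : Prop :=
  ∀ x : E, ∃ (a : E) (n : ℕ), IsAbsorbingState P a ∧ 0 < ((Matrix.of P) ^ n) x a

/-- A mixed stopping strategy: a vector in `[0,1]^E`. -/
def IsStrategy (p : E → ℝ) : Prop := ∀ x, p x ∈ Set.Icc (0 : ℝ) 1

/-- `Kval P f h g p x q
      = q f(x) + (1-q) E_x[φ_p(X_1)] + g (q h(x) + (1-q) E_x[ψ_p(X_1)])`. -/
noncomputable def Kval [Fintype E] (P : E → E → ℝ) (f h : E → ℝ) (g : ℝ → ℝ)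
    (p : E → ℝ) (x : E) (q : ℝ) : ℝ :=
  q * f x + (1 - q) * step P (phi P p f) x
    + g (q * h x + (1 - q) * step P (phi P p h) x)

/-- `Jval P f h g p x = φ_p(x) + g(ψ_p(x)) = E_x[f(X_{τ_p})] + g(E_x[h(X_{τ_p})])`. -/
noncomputable def Jval [Fintype E] (P : E → E → ℝ) (f h : E → ℝ) (g : ℝ → ℝ)
    (p : E → ℝ) (x : E) : ℝ :=
  phi P p f x + g (phi P p h x)

/-- Subgame perfect Nash equilibrium (condition (EqI)). -/
def IsEquilibrium [Fintype E] (P : E → E → ℝ) (f h : E → ℝ) (g : ℝ → ℝ)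
    (p : E → ℝ) : Prop :=
  ∀ x : E, ∀ q ∈ Set.Icc (0 : ℝ) 1, Kval P f h g p x q ≤ Jval P f h g p x

/-- Finite-horizon optimal-stopping value:
`valueSeq P f n x = sup { E_x[f(X_τ)] : τ a stopping time with τ ≤ n }`. -/
noncomputable def valueSeq [Fintype E] (P : E → E → ℝ) (f : E → ℝ) : ℕ → E → ℝ
  | 0 => f
  | n + 1 => fun x => max (f x) (step P (valueSeq P f n) x)

/-- `optValue P f x = sup_τ E_x[f(X_τ)]`, the optimal stopping value over all stopping
times of the filtration `σ(X_0,…,X_n,Y_0,…,Y_n)` (with the limit convention on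
`{τ = ∞}`); for a finite absorbing chain it is the limit of the finite-horizon values. -/
noncomputable def optValue [Fintype E] (P : E → E → ℝ) (f : E → ℝ) (x : E) : ℝ :=
  limUnder atTop fun n => valueSeq P f n x

/-!
Without the `g`-term, testing the equilibrium condition at `q = 1` and `q = 0` shows that
`p̂` is an equilibrium exactly when `φ_p̂` is a superharmonic majorant of `f`, i.e.
`f ≤ φ_p̂` and `E_x[φ_p̂(X_1)] ≤ φ_p̂`. The optimal value is the least superharmonic majorant
of `f` (Snell envelope): its finite-horizon approximations stay below every such majorant,
and it satisfies the Bellman equation `V = max (f, E_x[V(X_1)])`. Since also `φ_p ≤ V` for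
every strategy, the two conditions coincide. Convergence of the finite-horizon values of
`φ_p` comes from absorption: the probability of not being absorbed by time `n` decays
geometrically.
-/

open Matrix Set Topology

section RowStochastic

variable [Fintype E] [DecidableEq E] {M : Matrix E E ℝ}

lemma mulVec_mono_of_mem_rowStochastic (hM : M ∈ rowStochastic ℝ E) {v w : E → ℝ}
    (h : v ≤ w) : M *ᵥ v ≤ M *ᵥ w := by
  intro x
  have := nonneg_mulVec_of_mem_rowStochastic (x := w - v) hM (fun y => sub_nonneg.2 (h y)) x
  rwa [mulVec_sub, Pi.sub_apply, sub_nonneg] at this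

lemma mulVec_apply_mem_of_mem_rowStochastic (hM : M ∈ rowStochastic ℝ E) {S : Set ℝ}
    (hS : Convex ℝ S) {v : E → ℝ} (hv : ∀ y, v y ∈ S) (x : E) : (M *ᵥ v) x ∈ S :=
  hS.sum_mem (fun _ _ => nonneg_of_mem_rowStochastic hM) (sum_row_of_mem_rowStochastic hM x)
    fun y _ => hv y

end RowStochastic

section Step

variable [Fintype E] {P : E → E → ℝ}

lemma IsTransition.mem_rowStochastic [DecidableEq E] (hP : IsTransition P) :
    of P ∈ rowStochastic ℝ E :=
  mem_rowStochastic_iff_sum.2 hP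

lemma step_eq_mulVec (v : E → ℝ) : step P v = of P *ᵥ v := rfl

lemma step_mono (hP : IsTransition P) {v w : E → ℝ} (h : v ≤ w) : step P v ≤ step P w := by
  classical
  exact mulVec_mono_of_mem_rowStochastic hP.mem_rowStochastic h

lemma step_apply_mem (hP : IsTransition P) {S : Set ℝ} (hS : Convex ℝ S) {v : E → ℝ}
    (hv : ∀ y, v y ∈ S) (x : E) : step P v x ∈ S := by
  classical
  exact mulVec_apply_mem_of_mem_rowStochastic hP.mem_rowStochastic hS hv x

lemma step_const (hP : IsTransition P) (c : ℝ) : step P (fun _ => c) = fun _ => c :=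
  funext <| step_apply_mem hP (convex_singleton c) fun _ => rfl

lemma step_sub (v w : E → ℝ) : step P (v - w) = step P v - step P w := by
  simp only [step_eq_mulVec, mulVec_sub]

lemma step_smul (c : ℝ) (v : E → ℝ) : step P (c • v) = c • step P v := by
  simp only [step_eq_mulVec, mulVec_smul]

lemma abs_step_apply_le (hP : IsTransition P) {v w : E → ℝ} (h : ∀ y, |v y| ≤ w y) (x : E) :
    |step P v x| ≤ step P w x :=
  (Finset.abs_sum_le_sum_abs _ _).trans <| Finset.sum_le_sum fun y _ => by
    rw [abs_mul, abs_of_nonneg (hP.1 x y)]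
    exact mul_le_mul_of_nonneg_left (h y) (hP.1 x y)

lemma step_apply_of_isAbsorbingState (hP : IsTransition P) {a : E} (ha : IsAbsorbingState P a)
    (v : E → ℝ) : step P v a = v a := by
  classical
  have hrow : ∀ y ≠ a, P a y = 0 := by
    have hsum := hP.2 a
    rw [← Finset.add_sum_erase _ _ (Finset.mem_univ a), ha, add_eq_left] at hsum
    exact fun y hy => (Finset.sum_eq_zero_iff_of_nonneg fun z _ => hP.1 a z).1 hsum y
      (Finset.mem_erase.2 ⟨hy, Finset.mem_univ y⟩)
  rw [step, Finset.sum_eq_single_of_mem a (Finset.mem_univ a) fun y _ hy => by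
    rw [hrow y hy, zero_mul], ha, one_mul]

end Step

section Survival

variable [Fintype E] [DecidableEq E] {P : E → E → ℝ}

/-- `survivalProb P n x = P_x(X_n is not absorbing)`. -/
noncomputable def survivalProb (P : E → E → ℝ) (n : ℕ) : E → ℝ :=
  (of P ^ n) *ᵥ {a | IsAbsorbingState P a}ᶜ.indicator 1

lemma survivalProb_zero : survivalProb P 0 = {a | IsAbsorbingState P a}ᶜ.indicator 1 := by
  simp [survivalProb]

lemma survivalProb_add (m n : ℕ) :
    survivalProb P (m + n) = of P ^ m *ᵥ survivalProb P n := by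
  rw [survivalProb, pow_add, ← mulVec_mulVec, survivalProb]

lemma survivalProb_succ (n : ℕ) : survivalProb P (n + 1) = step P (survivalProb P n) := by
  rw [add_comm, survivalProb_add, pow_one, step_eq_mulVec]

lemma survivalProb_mem_Icc (hP : IsTransition P) (n : ℕ) (x : E) :
    survivalProb P n x ∈ Icc 0 1 :=
  mulVec_apply_mem_of_mem_rowStochastic (pow_mem hP.mem_rowStochastic n) (convex_Icc 0 1)
    (fun y => ⟨indicator_nonneg (fun _ _ => zero_le_one) y,
      indicator_le_self' (fun _ _ => zero_le_one) y⟩) x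

lemma survivalProb_of_isAbsorbingState (hP : IsTransition P) {a : E}
    (ha : IsAbsorbingState P a) (n : ℕ) : survivalProb P n a = 0 := by
  induction n with
  | zero => simp [survivalProb_zero, ha]
  | succ n ih => rw [survivalProb_succ, step_apply_of_isAbsorbingState hP ha, ih]

lemma survivalProb_add_le_smul (hP : IsTransition P) {N : ℕ} {c : ℝ}
    (hc : ∀ y, survivalProb P N y ≤ c) (n : ℕ) :
    survivalProb P (n + N) ≤ c • survivalProb P n := by
  have hN : survivalProb P N ≤ c • survivalProb P 0 := by
    intro y
    by_cases ha : IsAbsorbingState P y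
    · simp [survivalProb_of_isAbsorbingState hP ha]
    · simpa [survivalProb_zero, ha] using hc y
  calc survivalProb P (n + N) = of P ^ n *ᵥ survivalProb P N := survivalProb_add n N
    _ ≤ of P ^ n *ᵥ (c • survivalProb P 0) :=
      mulVec_mono_of_mem_rowStochastic (pow_mem hP.mem_rowStochastic n) hN
    _ = c • survivalProb P n := by rw [mulVec_smul, ← survivalProb_add, add_zero]

lemma antitone_survivalProb (hP : IsTransition P) : Antitone (survivalProb P) :=
  antitone_nat_of_succ_le fun n => by
    simpa using survivalProb_add_le_smul hP (fun y => (survivalProb_mem_Icc hP 1 y).2) n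

lemma survivalProb_lt_one (hP : IsTransition P) {x a : E} {n : ℕ} (ha : IsAbsorbingState P a)
    (hpos : 0 < (of P ^ n) x a) : survivalProb P n x < 1 := by
  have hind : {a | IsAbsorbingState P a}ᶜ.indicator (1 : E → ℝ) ≤ 1 - Pi.single a 1 := by
    intro y
    by_cases hy : y = a
    · subst hy; simp [ha]
    · simp only [Pi.sub_apply, Pi.one_apply, Pi.single_eq_of_ne hy, sub_zero]
      exact indicator_le_self' (fun _ _ => zero_le_one) y
  have hA := pow_mem hP.mem_rowStochastic n
  have := mulVec_mono_of_mem_rowStochastic hA hind x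
  rw [mulVec_sub, one_vecMul_of_mem_rowStochastic hA, mulVec_single_one] at this
  simp only [Pi.sub_apply, Pi.one_apply, col_apply] at this
  exact this.trans_lt (by linarith)

lemma exists_survivalProb_le (hP : IsTransition P) (habs : IsAbsorbingChain P) :
    ∃ N ≠ 0, ∃ c, 0 ≤ c ∧ c < 1 ∧ ∀ y, survivalProb P N y ≤ c := by
  have hN : ∀ᶠ N in atTop, ∀ y, survivalProb P N y < 1 := by
    refine eventually_all.2 fun y => ?_
    obtain ⟨a, n, ha, hpos⟩ := habs y
    filter_upwards [eventually_ge_atTop n] with N hN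
    exact (antitone_survivalProb hP hN y).trans_lt (survivalProb_lt_one hP ha hpos)
  obtain ⟨N, hN, hN0⟩ := (hN.and (eventually_ne_atTop 0)).exists
  have hc : ∀ᶠ c in 𝓝[<] (1 : ℝ), 0 ≤ c ∧ c < 1 ∧ ∀ y, survivalProb P N y ≤ c := by
    filter_upwards [Ioo_mem_nhdsLT zero_lt_one,
      eventually_all.2 fun y => Ioo_mem_nhdsLT (hN y)] with c hc hcy
    exact ⟨hc.1.le, hc.2, fun y => (hcy y).1.le⟩
  exact ⟨N, hN0, hc.exists⟩

lemma tendsto_survivalProb (hP : IsTransition P) (habs : IsAbsorbingChain P) (x : E) :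
    Tendsto (fun n => survivalProb P n x) atTop (𝓝 0) := by
  obtain ⟨N, hN0, c, hc0, hc1, hc⟩ := exists_survivalProb_le hP habs
  have hgeom : ∀ k y, survivalProb P (k * N) y ≤ c ^ k := by
    intro k
    induction k with
    | zero => simpa using fun y => (survivalProb_mem_Icc hP 0 y).2
    | succ k ih =>
      intro y
      calc survivalProb P ((k + 1) * N) y ≤ c * survivalProb P (k * N) y := by
            rw [add_one_mul]; exact survivalProb_add_le_smul hP hc _ y
        _ ≤ c * c ^ k := mul_le_mul_of_nonneg_left (ih y) hc0
        _ = c ^ (k + 1) := (pow_succ' c k).symm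
  refine squeeze_zero (fun n => (survivalProb_mem_Icc hP n x).1)
    (fun n => (antitone_survivalProb hP (Nat.div_mul_le_self n N) x).trans (hgeom (n / N) x))
    ((tendsto_pow_atTop_nhds_zero_of_lt_one hc0 hc1).comp (Nat.tendsto_div_const_atTop hN0))

end Survival

section Values

variable [Fintype E] {P : E → E → ℝ} {p f : E → ℝ}

lemma phiSeq_succ_apply_mem (hp : IsStrategy p) {S : Set ℝ} (hS : Convex ℝ S) {n : ℕ} {x : E}
    (hf : f x ∈ S) (hstep : step P (phiSeq P p f n) x ∈ S) : phiSeq P p f (n + 1) x ∈ S :=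
  hS hf hstep (hp x).1 (sub_nonneg.2 (hp x).2) (add_sub_cancel _ _)

lemma phiSeq_apply_mem (hP : IsTransition P) (hp : IsStrategy p) {S : Set ℝ} (hS : Convex ℝ S)
    (hf : ∀ y, f y ∈ S) (n : ℕ) (x : E) : phiSeq P p f n x ∈ S := by
  induction n generalizing x with
  | zero => exact hf x
  | succ n ih => exact phiSeq_succ_apply_mem hp hS (hf x) (step_apply_mem hP hS ih x)

lemma phiSeq_apply_of_isAbsorbingState (hP : IsTransition P) {a : E}
    (ha : IsAbsorbingState P a) (n : ℕ) : phiSeq P p f n a = f a := by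
  induction n with
  | zero => rfl
  | succ n ih => simp only [phiSeq, step_apply_of_isAbsorbingState hP ha, ih]; ring

lemma abs_phiSeq_add_sub_le [DecidableEq E] (hP : IsTransition P) (hp : IsStrategy p) {M : ℝ}
    (hM : ∀ y, |f y| ≤ M) (n k : ℕ) (x : E) :
    |phiSeq P p f (n + k) x - phiSeq P p f n x| ≤ 2 * M * survivalProb P n x := by
  induction n generalizing x with
  | zero =>
    by_cases ha : IsAbsorbingState P x
    · simp [phiSeq_apply_of_isAbsorbingState hP ha, survivalProb_of_isAbsorbingState hP ha]
    · have hbound : ∀ m, |phiSeq P p f m x| ≤ M := fun m =>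
        abs_le.2 (phiSeq_apply_mem hP hp (convex_Icc (-M) M) (fun y => abs_le.1 (hM y)) m x)
      simpa [survivalProb_zero, ha, two_mul] using
        (abs_sub _ _).trans (add_le_add (hbound (0 + k)) (hbound 0))
  | succ n ih =>
    have hdiff : |step P (phiSeq P p f (n + k)) x - step P (phiSeq P p f n) x|
        ≤ 2 * M * survivalProb P (n + 1) x := by
      have := abs_step_apply_le hP (v := phiSeq P p f (n + k) - phiSeq P p f n)
        (w := (2 * M) • survivalProb P n) ih x
      rwa [step_sub, step_smul, ← survivalProb_succ] at this
    rw [Nat.add_right_comm]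
    simp only [phiSeq]
    rw [add_sub_add_left_eq_sub, ← mul_sub, abs_mul, abs_of_nonneg (sub_nonneg.2 (hp x).2)]
    exact (mul_le_of_le_one_left (abs_nonneg _) (by linarith [(hp x).1])).trans hdiff

lemma tendsto_phiSeq [DecidableEq E] (hP : IsTransition P) (habs : IsAbsorbingChain P)
    (hp : IsStrategy p) (x : E) :
    Tendsto (fun n => phiSeq P p f n x) atTop (𝓝 (phi P p f x)) := by
  obtain ⟨M, hM⟩ := Finite.exists_le fun y => |f y|
  refine tendsto_nhds_limUnder (cauchySeq_tendsto_of_complete ?_)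
  refine cauchySeq_of_le_tendsto_0 (fun N => 2 * (2 * M * survivalProb P N x))
    (fun n m N hn hm => ?_) ?_
  · obtain ⟨k, rfl⟩ := Nat.exists_eq_add_of_le hn
    obtain ⟨l, rfl⟩ := Nat.exists_eq_add_of_le hm
    rw [two_mul]
    refine (dist_triangle_right _ _ (phiSeq P p f N x)).trans (add_le_add ?_ ?_) <;>
      exact abs_phiSeq_add_sub_le hP hp hM _ _ x
  · simpa using ((tendsto_survivalProb hP habs x).const_mul (2 * M)).const_mul 2

lemma monotone_valueSeq (hP : IsTransition P) (f : E → ℝ) : Monotone (valueSeq P f) := by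
  refine monotone_nat_of_le_succ fun n => ?_
  induction n with
  | zero => exact fun x => le_max_left _ _
  | succ n ih => exact fun x => max_le_max le_rfl (step_mono hP ih x)

lemma phiSeq_le_valueSeq (hP : IsTransition P) (hp : IsStrategy p) (n : ℕ) :
    phiSeq P p f n ≤ valueSeq P f n := by
  induction n with
  | zero => exact le_rfl
  | succ n ih =>
    intro x
    exact phiSeq_succ_apply_mem (S := Iic (valueSeq P f (n + 1) x)) hp (convex_Iic _)
      (le_max_left (f x) (step P (valueSeq P f n) x))
      ((step_mono hP ih x).trans (le_max_right (f x) _))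

lemma valueSeq_le_of_superharmonic (hP : IsTransition P) {w : E → ℝ} (hf : f ≤ w)
    (hw : step P w ≤ w) (n : ℕ) : valueSeq P f n ≤ w := by
  induction n with
  | zero => exact hf
  | succ n ih => exact fun x => max_le (hf x) ((step_mono hP ih x).trans (hw x))

lemma tendsto_valueSeq (hP : IsTransition P) (x : E) :
    Tendsto (fun n => valueSeq P f n x) atTop (𝓝 (optValue P f x)) := by
  obtain ⟨M, hM⟩ := Finite.exists_le f
  have hbdd : ∀ n, valueSeq P f n x ≤ M := fun n =>
    valueSeq_le_of_superharmonic hP (w := fun _ => M) hM (step_const hP M).le n x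
  exact tendsto_nhds_limUnder ⟨_, tendsto_atTop_ciSup (fun _ _ h => monotone_valueSeq hP f h x)
    ⟨M, forall_mem_range.2 hbdd⟩⟩

lemma optValue_eq_max_step (hP : IsTransition P) (x : E) :
    optValue P f x = max (f x) (step P (optValue P f) x) := by
  refine tendsto_nhds_unique ((tendsto_valueSeq hP x).comp (tendsto_add_atTop_nat 1)) ?_
  exact tendsto_const_nhds.max <|
    tendsto_finsetSum _ fun y _ => (tendsto_valueSeq hP y).const_mul (P x y)

lemma optValue_le_of_superharmonic (hP : IsTransition P) {w : E → ℝ} (hf : f ≤ w)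
    (hw : step P w ≤ w) : optValue P f ≤ w := fun x =>
  le_of_tendsto' (tendsto_valueSeq hP x) fun n => valueSeq_le_of_superharmonic hP hf hw n x

lemma phi_le_optValue [DecidableEq E] (hP : IsTransition P) (habs : IsAbsorbingChain P)
    (hp : IsStrategy p) : phi P p f ≤ optValue P f := fun x =>
  le_of_tendsto_of_tendsto' (tendsto_phiSeq hP habs hp x) (tendsto_valueSeq hP x)
    fun n => phiSeq_le_valueSeq hP hp n x

lemma isEquilibrium_iff_of_g_eq_zero {h : E → ℝ} {g : ℝ → ℝ} (hg : ∀ t, g t = 0) :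
    IsEquilibrium P f h g p ↔ f ≤ phi P p f ∧ step P (phi P p f) ≤ phi P p f := by
  simp only [IsEquilibrium, Kval, Jval, hg, add_zero]
  refine ⟨fun H => ⟨fun x => by simpa using H x 1 (by simp),
    fun x => by simpa using H x 0 (by simp)⟩, ?_⟩
  rintro ⟨hf, hstep⟩ x q ⟨hq0, hq1⟩
  exact convex_Iic (phi P p f x) (hf x) (hstep x) hq0 (sub_nonneg.2 hq1) (add_sub_cancel q 1)

end Values

/-- Theorem 3.1 (the time-consistent case): if `g = 0`, a strategy is an equilibrium
iff its stopping time is optimal (in the usual sense) for `sup_τ E_x[f(X_τ)]`. -/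
theorem equilibrium_iff_optimal_of_g_eq_zero [Fintype E] [DecidableEq E]
    (P : E → E → ℝ) (hP : IsTransition P) (habs : IsAbsorbingChain P)
    (f h : E → ℝ) (g : ℝ → ℝ) (hg0 : ∀ t, g t = 0)
    (phat : E → ℝ) (hphat : IsStrategy phat) :
    IsEquilibrium P f h g phat ↔ ∀ x : E, phi P phat f x = optValue P f x := by
  rw [isEquilibrium_iff_of_g_eq_zero hg0, ← funext_iff]
  constructor
  · rintro ⟨hf, hstep⟩
    exact le_antisymm (phi_le_optValue hP habs hphat) (optValue_le_of_superharmonic hP hf hstep)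
  · intro hopt
    rw [hopt]
    exact ⟨fun x => (optValue_eq_max_step hP x).symm ▸ le_max_left _ _,
      fun x => (optValue_eq_max_step hP x).symm ▸ le_max_right _ _⟩
end

section
/- A mixed stopping strategy p̂ is an equilibrium if and only if it is a fixed point of the point-to-set mapping Γ, i.e. if and only if p̂ ∈ Γ(p̂). -/
/-!
Analytic model of the time-inconsistent stopping framework of Christensen & Lindensjö,
"Time-inconsistent stopping, myopic adjustment & equilibrium stability".

A time-homogeneous Markov chain `X` on a finite state space `E` is encoded by its
transition matrix `P` (`P x y = P_x(X_1 = y)`).  A mixed stopping strategy is a vector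
`p ∈ [0,1]^E`; the associated stopping time is `τ_p = min {n ≥ 0 : Y_n ≤ p_{X_n}}`,
where the `Y_n` are i.i.d. uniform randomization devices.  The quantity
`phi P p f x = E_x[f(X_{τ_p})]` (with the convention `f(X_{τ_p}) := lim_n f(X_n)` on
`{τ_p = ∞}`, the limit existing a.s. by absorption) is realized analytically, via
dominated convergence, as the limit in `n` of the finite-horizon values
`phiSeq P p f n x = E_x[f(X_{τ_p ∧ n})]`, which satisfy the one-step recursion given
by the Markov property.  Likewise `step P v x = E_x[v(X_1)]`.
-/

open Filter
open Finset Topology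

variable {E : Type*}

/-- The point-to-set mapping `Γ`: `Γ(p)` is the set of strategies `p*` such that, for
every state `x`, `p*_x` is a maximizer of `q ↦ K(x,q,p)` over `[0,1]`. -/
def Gamma [Fintype E] (P : E → E → ℝ) (f h : E → ℝ) (g : ℝ → ℝ)
    (p : E → ℝ) : Set (E → ℝ) :=
  {pstar | IsStrategy pstar ∧
    ∀ x : E, IsMaxOn (fun q => Kval P f h g p x q) (Set.Icc (0 : ℝ) 1) (pstar x)}

section Aux

variable [Fintype E] [DecidableEq E] (P : E → E → ℝ)

/-- transient states -/
noncomputable def TSet : Finset E := Finset.univ.filter (fun y : E => P y y ≠ 1)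

/-- `uT P n x = P_x(X_n not absorbed-state)` -/
noncomputable def uT (n : ℕ) (x : E) : ℝ := ∑ y ∈ TSet P, ((Matrix.of P) ^ n) x y

variable {P}

lemma pow_entry_nonneg (hP : IsTransition P) (n : ℕ) (x y : E) :
    0 ≤ ((Matrix.of P) ^ n) x y := by
  induction n generalizing x y with
  | zero => simp [Matrix.one_apply]; positivity
  | succ n ih =>
    rw [pow_succ, Matrix.mul_apply]
    exact Finset.sum_nonneg fun z _ => mul_nonneg (ih x z) (hP.1 z y)

lemma pow_rowsum (hP : IsTransition P) (n : ℕ) (x : E) :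
    ∑ y, ((Matrix.of P) ^ n) x y = 1 := by
  induction n generalizing x with
  | zero => simp [Matrix.one_apply]
  | succ n ih =>
    simp only [pow_succ, Matrix.mul_apply]
    rw [Finset.sum_comm]
    have : ∀ z ∈ Finset.univ, ∑ y, ((Matrix.of P) ^ n) x z * (Matrix.of P) z y
        = ((Matrix.of P) ^ n) x z := by
      intro z _
      rw [← Finset.mul_sum]
      have : ∑ y, (Matrix.of P) z y = 1 := hP.2 z
      rw [this, mul_one]
    rw [Finset.sum_congr rfl this, ih]

lemma absorbing_row (hP : IsTransition P) {a : E} (ha : P a a = 1) {y : E} (hy : y ≠ a) :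
    P a y = 0 := by
  have h1 : ∑ y, P a y = 1 := hP.2 a
  have h2 : ∑ y ∈ Finset.univ.erase a, P a y = 0 := by
    have h3 := Finset.add_sum_erase Finset.univ (P a) (Finset.mem_univ a)
    linarith
  have := (Finset.sum_eq_zero_iff_of_nonneg (fun y _ => hP.1 a y)).mp h2
  exact this y (Finset.mem_erase.mpr ⟨hy, Finset.mem_univ y⟩)

lemma absorbing_pow (hP : IsTransition P) {a : E} (ha : P a a = 1) (n : ℕ) (y : E) :
    ((Matrix.of P) ^ n) a y = if y = a then 1 else 0 := by
  induction n with
  | zero => simp [Matrix.one_apply, eq_comm]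
  | succ n ih =>
    rw [pow_succ', Matrix.mul_apply]
    rw [Finset.sum_eq_single a]
    · simpa [Matrix.of_apply, ha] using ih
    · intro z _ hz
      have : P a z = 0 := absorbing_row hP ha hz
      simp [Matrix.of_apply, this]
    · simp

lemma uT_absorbing (hP : IsTransition P) {a : E} (ha : P a a = 1) (n : ℕ) :
    uT P n a = 0 := by
  unfold uT
  apply Finset.sum_eq_zero
  intro y hy
  rw [absorbing_pow hP ha]
  rw [TSet, Finset.mem_filter] at hy
  have : y ≠ a := fun h => hy.2 (h ▸ ha)
  simp [this]

lemma uT_add (s t : ℕ) (x : E) :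
    uT P (s + t) x = ∑ z, ((Matrix.of P) ^ s) x z * uT P t z := by
  unfold uT
  rw [pow_add]
  simp only [Matrix.mul_apply]
  rw [Finset.sum_comm]
  simp [Finset.mul_sum]

lemma uT_nonneg (hP : IsTransition P) (n : ℕ) (x : E) : 0 ≤ uT P n x :=
  Finset.sum_nonneg fun y _ => pow_entry_nonneg hP n x y

lemma uT_zero_le_one (hP : IsTransition P) (x : E) : uT P 0 x ≤ 1 := by
  calc uT P 0 x ≤ ∑ y, ((Matrix.of P) ^ 0) x y :=
        Finset.sum_le_sum_of_subset_of_nonneg (Finset.filter_subset _ _)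
          (fun y _ _ => pow_entry_nonneg hP 0 x y)
    _ = 1 := pow_rowsum hP 0 x

lemma uT_le_one (hP : IsTransition P) (n : ℕ) (x : E) : uT P n x ≤ 1 := by
  calc uT P n x ≤ ∑ y, ((Matrix.of P) ^ n) x y :=
        Finset.sum_le_sum_of_subset_of_nonneg (Finset.filter_subset _ _)
          (fun y _ _ => pow_entry_nonneg hP n x y)
    _ = 1 := pow_rowsum hP n x

lemma uT_zero_eq (x : E) : uT P 0 x = if x ∈ TSet P then 1 else 0 := by
  unfold uT
  simp only [pow_zero, Matrix.one_apply]
  rw [Finset.sum_ite_eq (TSet P) x (fun _ => (1:ℝ))]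

lemma uT_one_le (hP : IsTransition P) (z : E) : uT P 1 z ≤ uT P 0 z := by
  by_cases hz : P z z = 1
  · rw [uT_absorbing hP hz, uT_zero_eq]
    have : z ∉ TSet P := by simp [TSet, hz]
    simp [this]
  · rw [uT_zero_eq]
    have : z ∈ TSet P := by simp [TSet, hz]
    simpa [this] using uT_le_one hP 1 z

lemma uT_antitone (hP : IsTransition P) (x : E) : Antitone (fun n => uT P n x) := by
  apply antitone_nat_of_succ_le
  intro n
  have h1 : uT P (n + 1) x = ∑ z, ((Matrix.of P) ^ n) x z * uT P 1 z := uT_add n 1 x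
  have h0 : uT P (n + 0) x = ∑ z, ((Matrix.of P) ^ n) x z * uT P 0 z := uT_add n 0 x
  show uT P (n+1) x ≤ uT P n x
  rw [h1, show uT P n x = uT P (n + 0) x from rfl, h0]
  exact Finset.sum_le_sum fun z _ =>
    mul_le_mul_of_nonneg_left (uT_one_le hP z) (pow_entry_nonneg hP n x z)

lemma uT_iter (hP : IsTransition P) {m : ℕ} {θ : ℝ} (hθ0 : 0 ≤ θ)
    (hm : ∀ z, uT P m z ≤ θ * uT P 0 z) (k : ℕ) (x : E) :
    uT P (k * m) x ≤ θ ^ k * uT P 0 x := by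
  induction k generalizing x with
  | zero => simp
  | succ k ih =>
    have hrw : (k + 1) * m = m + k * m := by ring
    rw [hrw, uT_add m (k * m) x]
    have h1 : ∑ z, ((Matrix.of P) ^ m) x z * uT P (k * m) z
        ≤ ∑ z, ((Matrix.of P) ^ m) x z * (θ ^ k * uT P 0 z) :=
      Finset.sum_le_sum fun z _ =>
        mul_le_mul_of_nonneg_left (ih z) (pow_entry_nonneg hP m x z)
    have h2 : ∑ z, ((Matrix.of P) ^ m) x z * (θ ^ k * uT P 0 z)
        = θ ^ k * uT P (m + 0) x := by
      rw [uT_add m 0 x, Finset.mul_sum]; congr 1; ext z; ring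
    have h3 : uT P (m + 0) x ≤ θ * uT P 0 x := by simpa using hm x
    calc ∑ z, ((Matrix.of P) ^ m) x z * uT P (k * m) z
        ≤ θ ^ k * uT P (m + 0) x := h1.trans (le_of_eq h2)
      _ ≤ θ ^ k * (θ * uT P 0 x) :=
          mul_le_mul_of_nonneg_left h3 (pow_nonneg hθ0 k)
      _ = θ ^ (k + 1) * uT P 0 x := by ring

lemma uT_geom [Nonempty E] (hP : IsTransition P) (habs : IsAbsorbingChain P) :
    ∃ r C : ℝ, 0 < r ∧ r < 1 ∧ 0 ≤ C ∧ ∀ n x, uT P n x ≤ C * r ^ n := by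
  choose a nn ha hn using habs
  set m : ℕ := 1 + Finset.univ.sup nn with hm_def
  have hm_pos : 0 < m := Nat.lt_of_lt_of_le Nat.zero_lt_one (Nat.le_add_right 1 _)
  have hlt : ∀ x, uT P m x < 1 := by
    intro x
    have hle : uT P m x ≤ uT P (nn x) x := by
      apply uT_antitone hP x
      exact le_trans (Finset.le_sup (Finset.mem_univ x)) (Nat.le_add_left _ 1)
    have hsub : uT P (nn x) x ≤ 1 - ((Matrix.of P) ^ (nn x)) x (a x) := by
      have hTsub : TSet P ⊆ Finset.univ.erase (a x) := by
        intro y hy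
        rw [TSet, Finset.mem_filter] at hy
        refine Finset.mem_erase.mpr ⟨fun hya => hy.2 (hya ▸ (ha x)), Finset.mem_univ y⟩
      have h1 : uT P (nn x) x ≤ ∑ y ∈ Finset.univ.erase (a x), ((Matrix.of P) ^ (nn x)) x y :=
        Finset.sum_le_sum_of_subset_of_nonneg hTsub
          (fun y _ _ => pow_entry_nonneg hP (nn x) x y)
      have h2 : ((Matrix.of P) ^ (nn x)) x (a x)
          + ∑ y ∈ Finset.univ.erase (a x), ((Matrix.of P) ^ (nn x)) x y = 1 := by
        rw [Finset.add_sum_erase Finset.univ _ (Finset.mem_univ (a x))]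
        exact pow_rowsum hP (nn x) x
      linarith
    linarith [hn x]
  set θ : ℝ := max (Finset.univ.sup' Finset.univ_nonempty (fun x => uT P m x)) (1/2) with hθ_def
  have hθ_pos : 0 < θ := lt_of_lt_of_le (by norm_num) (le_max_right _ _)
  have hθ_lt1 : θ < 1 := by
    apply max_lt _ (by norm_num)
    rw [Finset.sup'_lt_iff]
    intro x _; exact hlt x
  have hθ_le : ∀ x, uT P m x ≤ θ * uT P 0 x := by
    intro x
    by_cases hx : P x x = 1
    · rw [uT_absorbing hP hx, uT_zero_eq]
      have : x ∉ TSet P := by simp [TSet, hx]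
      simp [this]
    · rw [uT_zero_eq]
      have : x ∈ TSet P := by simp [TSet, hx]
      simp only [this, if_pos, mul_one]
      exact le_trans (Finset.le_sup' _ (Finset.mem_univ x)) (le_max_left _ _)
  refine ⟨θ ^ ((m : ℝ)⁻¹), θ⁻¹, Real.rpow_pos_of_pos hθ_pos _,
    Real.rpow_lt_one hθ_pos.le hθ_lt1 (by positivity), by positivity, ?_⟩
  intro n x
  have key1 : uT P n x ≤ θ ^ (n / m) := by
    have h1 : uT P n x ≤ uT P (n / m * m) x :=
      uT_antitone hP x (Nat.div_mul_le_self n m)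
    have h2 := uT_iter hP hθ_pos.le hθ_le (n / m) x
    have h3 : θ ^ (n / m) * uT P 0 x ≤ θ ^ (n / m) * 1 :=
      mul_le_mul_of_nonneg_left (uT_zero_le_one hP x) (pow_nonneg hθ_pos.le _)
    rw [mul_one] at h3
    linarith
  have key2 : (θ : ℝ) ^ (n / m : ℕ) ≤ θ⁻¹ * (θ ^ ((m : ℝ)⁻¹)) ^ n := by
    have hr : (θ ^ ((m : ℝ)⁻¹)) ^ n = θ ^ ((m : ℝ)⁻¹ * n) := by
      rw [← Real.rpow_natCast (θ ^ ((m : ℝ)⁻¹)) n, ← Real.rpow_mul hθ_pos.le]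
    have hl : (θ : ℝ) ^ (n / m : ℕ) = θ ^ (((n / m : ℕ) : ℝ)) := by
      rw [Real.rpow_natCast]
    have harith : (m : ℝ)⁻¹ * n - 1 ≤ ((n / m : ℕ) : ℝ) := by
      have hmod : m * (n / m) + n % m = n := Nat.div_add_mod n m
      have hmodlt : n % m < m := Nat.mod_lt n hm_pos
      have hcast : (n : ℝ) < m * ((n / m : ℕ) : ℝ) + m := by
        have h4 : (m : ℝ) * ((n / m : ℕ) : ℝ) + ((n % m : ℕ) : ℝ) = (n : ℝ) := by
          exact_mod_cast hmod
        have h5 : ((n % m : ℕ) : ℝ) < m := by exact_mod_cast hmodlt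
        linarith
      have hmR : (0 : ℝ) < m := by exact_mod_cast hm_pos
      rw [sub_le_iff_le_add, inv_mul_le_iff₀ hmR]
      nlinarith
    rw [hl, hr]
    have := Real.rpow_le_rpow_of_exponent_ge hθ_pos hθ_lt1.le harith
    calc θ ^ (((n / m : ℕ) : ℝ)) ≤ θ ^ ((m : ℝ)⁻¹ * n - 1) := this
      _ = θ⁻¹ * θ ^ ((m : ℝ)⁻¹ * (n : ℝ)) := by
          rw [Real.rpow_sub hθ_pos, Real.rpow_one]; ring
  calc uT P n x ≤ θ ^ (n / m) := key1
    _ ≤ θ⁻¹ * (θ ^ ((m : ℝ)⁻¹)) ^ n := key2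

end Aux




section Rec

variable [Fintype E] [DecidableEq E] {P : E → E → ℝ} {p : E → ℝ}

lemma step_absorbing (hP : IsTransition P) {x : E} (hx : P x x = 1) (v : E → ℝ) :
    step P v x = v x := by
  rw [step, Finset.sum_eq_single x]
  · rw [hx, one_mul]
  · intro y _ hy; rw [absorbing_row hP hx hy, zero_mul]
  · simp

lemma phiSeq_diff_bound [Nonempty E] (hP : IsTransition P) (hp : IsStrategy p) (f : E → ℝ) :
    ∃ C : ℝ, 0 ≤ C ∧ ∀ n x, |phiSeq P p f (n + 1) x - phiSeq P p f n x| ≤ C * uT P n x := by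
  set C : ℝ := Finset.univ.sup' Finset.univ_nonempty
    (fun y => |phiSeq P p f 1 y - phiSeq P p f 0 y|) with hC_def
  have hC0 : 0 ≤ C := le_trans (abs_nonneg _)
    (Finset.le_sup' (fun y => |phiSeq P p f 1 y - phiSeq P p f 0 y|)
      (Finset.mem_univ (Classical.ofNonempty : E)))
  refine ⟨C, hC0, ?_⟩
  intro n
  induction n with
  | zero =>
    intro x
    by_cases hx : P x x = 1
    · have h0 : uT P 0 x = 0 := by
        rw [uT_zero_eq]
        have : x ∉ TSet P := by simp [TSet, hx]
        simp [this]
      have h1 : phiSeq P p f 1 x = f x := by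
        show p x * f x + (1 - p x) * step P (phiSeq P p f 0) x = f x
        rw [step_absorbing hP hx]
        show p x * f x + (1 - p x) * f x = f x
        ring
      rw [h0, mul_zero, h1]
      show |f x - f x| ≤ 0
      simp
    · have h0 : uT P 0 x = 1 := by
        rw [uT_zero_eq]
        have : x ∈ TSet P := by simp [TSet, hx]
        simp [this]
      rw [h0, mul_one]
      exact Finset.le_sup' (fun y => |phiSeq P p f 1 y - phiSeq P p f 0 y|) (Finset.mem_univ x)
  | succ n ih =>
    intro x
    have hdiff : phiSeq P p f (n + 2) x - phiSeq P p f (n + 1) x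
        = (1 - p x) * ∑ y, P x y * (phiSeq P p f (n + 1) y - phiSeq P p f n y) := by
      have e1 : ∑ y, P x y * (phiSeq P p f (n + 1) y - phiSeq P p f n y)
          = step P (phiSeq P p f (n + 1)) x - step P (phiSeq P p f n) x := by
        rw [step, step, ← Finset.sum_sub_distrib]
        exact Finset.sum_congr rfl fun y _ => by ring
      show (p x * f x + (1 - p x) * step P (phiSeq P p f (n + 1)) x)
          - (p x * f x + (1 - p x) * step P (phiSeq P p f n) x) = _
      rw [e1]; ring
    rw [hdiff, abs_mul]
    have hp1 : |1 - p x| ≤ 1 := by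
      rcases hp x with ⟨h1, h2⟩
      rw [abs_le]; constructor <;> linarith
    have hsum : |∑ y, P x y * (phiSeq P p f (n + 1) y - phiSeq P p f n y)|
        ≤ ∑ y, P x y * (C * uT P n y) := by
      refine le_trans (Finset.abs_sum_le_sum_abs _ _) (Finset.sum_le_sum fun y _ => ?_)
      rw [abs_mul, abs_of_nonneg (hP.1 x y)]
      exact mul_le_mul_of_nonneg_left (ih y) (hP.1 x y)
    have huT : ∑ y, P x y * (C * uT P n y) = C * uT P (n + 1) x := by
      rw [show n + 1 = 1 + n from add_comm n 1, uT_add 1 n x, Finset.mul_sum]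
      congr 1; ext y
      rw [pow_one]
      show P x y * (C * uT P n y) = C * ((Matrix.of P) x y * uT P n y)
      rw [Matrix.of_apply]; ring
    calc |1 - p x| * |∑ y, P x y * (phiSeq P p f (n + 1) y - phiSeq P p f n y)|
        ≤ 1 * (∑ y, P x y * (C * uT P n y)) := by
          apply mul_le_mul hp1 hsum (abs_nonneg _) zero_le_one
      _ = C * uT P (n + 1) x := by rw [one_mul, huT]

lemma phiSeq_tendsto (hP : IsTransition P) (habs : IsAbsorbingChain P)
    (hp : IsStrategy p) (f : E → ℝ) (x : E) :
    Tendsto (fun n => phiSeq P p f n x) atTop (𝓝 (phi P p f x)) := by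
  haveI : Nonempty E := ⟨x⟩
  obtain ⟨C, hC0, hbd⟩ := phiSeq_diff_bound hP hp f
  obtain ⟨r, C2, hr0, hr1, hC2, hgeom⟩ := uT_geom hP habs
  have hcauchy : CauchySeq (fun n => phiSeq P p f n x) := by
    apply cauchySeq_of_le_geometric r (C * C2) hr1
    intro n
    rw [Real.dist_eq, abs_sub_comm]
    calc |phiSeq P p f (n + 1) x - phiSeq P p f n x| ≤ C * uT P n x := hbd n x
      _ ≤ C * (C2 * r ^ n) := mul_le_mul_of_nonneg_left (hgeom n x) hC0
      _ = C * C2 * r ^ n := by ring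
  obtain ⟨L, hL⟩ := cauchySeq_tendsto_of_complete hcauchy
  have : phi P p f x = L := hL.limUnder_eq
  rw [this]
  exact hL

lemma phi_rec (hP : IsTransition P) (habs : IsAbsorbingChain P)
    (hp : IsStrategy p) (f : E → ℝ) (x : E) :
    phi P p f x = p x * f x + (1 - p x) * step P (phi P p f) x := by
  have ht := fun y => phiSeq_tendsto hP habs hp f y
  have h1 : Tendsto (fun n => phiSeq P p f (n + 1) x) atTop (𝓝 (phi P p f x)) :=
    (ht x).comp (tendsto_add_atTop_nat 1)
  have h2 : Tendsto (fun n => p x * f x + (1 - p x) * step P (phiSeq P p f n) x) atTop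
      (𝓝 (p x * f x + (1 - p x) * step P (phi P p f) x)) := by
    apply tendsto_const_nhds.add
    apply tendsto_const_nhds.mul
    unfold step
    exact tendsto_finset_sum _ fun y _ => tendsto_const_nhds.mul (ht y)
  have heq : (fun n => phiSeq P p f (n + 1) x)
      = fun n => p x * f x + (1 - p x) * step P (phiSeq P p f n) x := by
    funext n; rfl
  rw [heq] at h1
  exact tendsto_nhds_unique h1 h2

end Rec

/-- Proposition 5.2: a strategy is an equilibrium iff it is a fixed point of `Γ`. -/
theorem equilibrium_iff_fixed_point [Fintype E] [DecidableEq E]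
    (P : E → E → ℝ) (hP : IsTransition P) (habs : IsAbsorbingChain P)
    (f h : E → ℝ) (g : ℝ → ℝ) (hg : Continuous g)
    (phat : E → ℝ) (hphat : IsStrategy phat) :
    IsEquilibrium P f h g phat ↔ phat ∈ Gamma P f h g phat := by
  have key : ∀ x : E, Jval P f h g phat x = Kval P f h g phat x (phat x) := by
    intro x
    have hf := phi_rec hP habs hphat f x
    have hh := phi_rec hP habs hphat h x
    rw [Jval, Kval, hf, hh]
  constructor
  · intro heq
    refine ⟨hphat, fun x => ?_⟩
    rw [isMaxOn_iff]
    intro q hq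
    exact le_trans (heq x q hq) (le_of_eq (key x))
  · rintro ⟨-, hmax⟩
    intro x q hq
    exact le_trans (hmax x hq) (le_of_eq (key x).symm)
end
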